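/- arXiv:1305.2539 — 5 statements merged into one kernel-verified Lean document; each statement's English description precedes it below -/
import Mathlib

section
/- Let G = (V,E) be a finite connected k-regular graph of diameter exactly d, and suppose the adjacency matrix A of G has precisely d+1 distinct eigenvalues θ_0 > θ_1 > ... > θ_d (so θ_0 = k). Then for every pair of vertices x, y with ∂(x,y) = d and every i ∈ {1,...,d}, the (x,y)-entry of the spectral projection E_i equals -K_i/|V|, where K_i = ∏_{j∈{1,...,d}, j≠i} (θ_0 - θ_j)/(θ_i - θ_j). -/
/-!
Since `θ 0 = k` and `G` is connected and `k`-regular, every column of `E 0` lies in the kernel of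
the Laplacian and is therefore constant; being a nonzero symmetric idempotent, `E 0 = J / |V|`.
Now take `p = ∏_{j ≠ 0, i} (X - θ j)`, of degree `d - 1`. Because `(A ^ n) x y` counts walks of
length `n`, `p(A) x y = 0` when `∂(x, y) = d`; expanding `p(A) = ∑ₘ p(θ m) E m` leaves only
`p(θ 0) E 0 x y + p(θ i) E i x y = 0`, which is the claimed formula.
-/

open Polynomial Matrix

theorem Polynomial.aeval_mul_of_mul_eq_smul {R A : Type*} [CommRing R] [Ring A] [Algebra R A]
    {a m : A} {t : R} (h : a * m = t • m) (p : R[X]) : aeval a p * m = p.eval t • m := by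
  have := Module.End.aeval_apply_of_mem_apply_eq_smul (f := Algebra.lmul R A a) (p := p) h
  rwa [aeval_algHom_apply] at this

theorem Polynomial.aeval_eq_sum_smul_of_mul_eq_smul {R A ι : Type*} [CommRing R] [Ring A]
    [Algebra R A] [Fintype ι] {a : A} {e : ι → A} {θ : ι → R} (hsum : ∑ i, e i = 1)
    (he : ∀ i, a * e i = θ i • e i) (p : R[X]) : aeval a p = ∑ i, p.eval (θ i) • e i :=
  calc aeval a p = aeval a p * ∑ i, e i := by rw [hsum, mul_one]
    _ = ∑ i, p.eval (θ i) • e i := by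
      simp only [Finset.mul_sum, aeval_mul_of_mul_eq_smul (he _)]

theorem Matrix.apply_eq_inv_card_of_mul_self_eq {n K : Type*} [Fintype n] [Field K]
    {M : Matrix n n K} (hsymm : M.IsSymm) (hidem : M * M = M) (hne : M ≠ 0)
    (hcol : ∀ a a' b, M a b = M a' b) (x y : n) : M x y = (Fintype.card n : K)⁻¹ := by
  have hconst : ∀ a b, M a b = M x y := fun a b => by
    rw [hcol a x b, ← hsymm.apply x b, hcol b y x, hsymm.apply y x]
  have hc : M x y ≠ 0 := fun h0 => hne (Matrix.ext fun a b => (hconst a b).trans h0)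
  have hsq : (Fintype.card n : K) * (M x y * M x y) = M x y := by
    conv_rhs => rw [← hidem, Matrix.mul_apply]
    simp [hconst]
  refine eq_inv_of_mul_eq_one_left (mul_right_cancel₀ hc ?_)
  linear_combination hsq

namespace SimpleGraph

variable {V : Type*} [Fintype V] [DecidableEq V] (G : SimpleGraph V) [DecidableRel G.Adj]

theorem adjMatrix_pow_apply_eq_zero_of_lt_dist {R : Type*} [Semiring R] {n : ℕ} {u v : V}
    (h : n < G.dist u v) : (G.adjMatrix R ^ n) u v = 0 := by
  have : IsEmpty { p : G.Walk u v | p.length = n } :=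
    ⟨fun ⟨p, hp⟩ => (G.dist_le p).not_gt (hp ▸ h)⟩
  rw [adjMatrix_pow_apply_eq_card_walk, Fintype.card_eq_zero, Nat.cast_zero]

theorem aeval_adjMatrix_apply_eq_zero_of_natDegree_lt_dist {R : Type*} [CommSemiring R]
    {p : R[X]} {u v : V} (h : p.natDegree < G.dist u v) : aeval (G.adjMatrix R) p u v = 0 := by
  rw [aeval_eq_sum_range, Matrix.sum_apply]
  refine Finset.sum_eq_zero fun n hn => ?_
  rw [Matrix.smul_apply, G.adjMatrix_pow_apply_eq_zero_of_lt_dist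
    ((Finset.mem_range_succ_iff.mp hn).trans_lt h), smul_zero]

variable {G}

theorem Connected.eq_of_adjMatrix_mulVec_eq_smul {k : ℕ} (hconn : G.Connected)
    (hreg : G.IsRegularOfDegree k) {f : V → ℝ} (hf : G.adjMatrix ℝ *ᵥ f = (k : ℝ) • f)
    (u v : V) : f u = f v := by
  have hlap : G.lapMatrix ℝ *ᵥ f = 0 := by
    ext w
    rw [lapMatrix, Matrix.sub_mulVec, Pi.sub_apply, degMatrix_mulVec_apply, hf, hreg w]
    simp
  exact (lapMatrix_mulVec_eq_zero_iff_forall_reachable G).mp hlap u v (hconn u v)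

theorem Connected.apply_eq_of_adjMatrix_mul_eq_smul {k : ℕ} (hconn : G.Connected)
    (hreg : G.IsRegularOfDegree k) {M : Matrix V V ℝ} (hM : G.adjMatrix ℝ * M = (k : ℝ) • M)
    (a a' b : V) : M a b = M a' b :=
  hconn.eq_of_adjMatrix_mulVec_eq_smul hreg (f := fun a => M a b)
    (funext fun a => by
      simpa [Matrix.mul_apply, Matrix.mulVec, dotProduct] using congrFun (congrFun hM a) b) a a'

end SimpleGraph

theorem stmt_0_general {V : Type*} [Fintype V] [DecidableEq V]
    (G : SimpleGraph V) [DecidableRel G.Adj] (k d : ℕ)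
    (hconn : G.Connected) (hreg : G.IsRegularOfDegree k)
    (θ : Fin (d + 1) → ℝ) (hθ : StrictAnti θ) (hθ0 : θ 0 = (k : ℝ))
    (E : Fin (d + 1) → Matrix V V ℝ)
    (hsymm : ∀ i, (E i).IsSymm)
    (hidem : ∀ i, E i * E i = E i)
    (hsum : ∑ i, E i = 1)
    (hAE : ∀ i, G.adjMatrix ℝ * E i = θ i • E i)
    (hne : ∀ i, E i ≠ 0) :
    ∀ x y : V, G.dist x y = d → ∀ i : Fin (d + 1), i ≠ 0 →
      E i x y =
        -(∏ j ∈ Finset.univ.filter (fun j : Fin (d + 1) => j ≠ 0 ∧ j ≠ i),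
            (θ 0 - θ j) / (θ i - θ j)) / (Fintype.card V : ℝ) := by
  intro x y hxy i hi
  set S := Finset.univ.filter (fun j : Fin (d + 1) => j ≠ 0 ∧ j ≠ i)
  set p : ℝ[X] := ∏ j ∈ S, (X - C (θ j))
  have heval : ∀ t, p.eval t = ∏ j ∈ S, (t - θ j) := fun t => by simp [p, eval_prod]
  have hE0 : E 0 x y = (Fintype.card V : ℝ)⁻¹ :=
    Matrix.apply_eq_inv_card_of_mul_self_eq (hsymm 0) (hidem 0) (hne 0)
      (hconn.apply_eq_of_adjMatrix_mul_eq_smul hreg (hθ0 ▸ hAE 0)) x y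
  have hdeg : p.natDegree < G.dist x y := by
    have hS : S ⊂ Finset.univ.erase 0 :=
      Finset.ssubset_iff_of_subset (fun j hj => by simp_all [S]) |>.mpr ⟨i, by simp [hi, S]⟩
    simpa [p, hxy] using Finset.card_lt_card hS
  have hrel : p.eval (θ 0) * E 0 x y + p.eval (θ i) * E i x y = 0 := by
    have hzero := G.aeval_adjMatrix_apply_eq_zero_of_natDegree_lt_dist hdeg
    rwa [aeval_eq_sum_smul_of_mul_eq_smul hsum hAE, Matrix.sum_apply,
      Fintype.sum_eq_add 0 i hi.symm fun m hm => by
        rw [Matrix.smul_apply, heval, Finset.prod_eq_zero (show m ∈ S by simp [S, hm])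
          (sub_self _), zero_smul]] at hzero
  have hpi : p.eval (θ i) ≠ 0 := heval _ ▸ Finset.prod_ne_zero_iff.mpr fun j hj =>
    sub_ne_zero.mpr (hθ.injective.ne (Finset.mem_filter.mp hj).2.2.symm)
  have : Nonempty V := hconn.nonempty
  have hcard : (Fintype.card V : ℝ) ≠ 0 := by positivity
  rw [hE0] at hrel
  rw [Finset.prod_div_distrib, ← heval, ← heval]
  field_simp at hrel ⊢
  linear_combination hrel

/-- Let `G` be a finite connected `k`-regular graph of diameter exactly `d`,
whose adjacency matrix `A` has precisely `d+1` distinct eigenvalues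
`θ 0 > θ 1 > ⋯ > θ d` (so `θ 0 = k`), with spectral projections `E 0, …, E d`.
Then for every pair of vertices `x, y` at distance `d` and every `i ∈ {1, …, d}`,
the `(x,y)`-entry of `E i` equals `-K i / |V|`, where
`K i = ∏_{j ∈ {1,…,d}, j ≠ i} (θ 0 - θ j) / (θ i - θ j)`. -/
theorem stmt_0 {V : Type*} [Fintype V] [DecidableEq V]
    (G : SimpleGraph V) [DecidableRel G.Adj] (k d : ℕ)
    (hconn : G.Connected) (hreg : G.IsRegularOfDegree k)
    (hdiam : G.diam = d)
    (θ : Fin (d + 1) → ℝ) (hθ : StrictAnti θ) (hθ0 : θ 0 = (k : ℝ))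
    (E : Fin (d + 1) → Matrix V V ℝ)
    (hsymm : ∀ i, (E i).IsSymm)
    (hidem : ∀ i, E i * E i = E i)
    (horth : ∀ i j, i ≠ j → E i * E j = 0)
    (hsum : ∑ i, E i = 1)
    (hAE : ∀ i, G.adjMatrix ℝ * E i = θ i • E i)
    (hne : ∀ i, E i ≠ 0) :
    ∀ x y : V, G.dist x y = d → ∀ i : Fin (d + 1), i ≠ 0 →
      E i x y =
        -(∏ j ∈ Finset.univ.filter (fun j : Fin (d + 1) => j ≠ 0 ∧ j ≠ i),
            (θ 0 - θ j) / (θ i - θ j)) / (Fintype.card V : ℝ) :=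
  stmt_0_general G k d hconn hreg θ hθ hθ0 E hsymm hidem hsum hAE hne
end

section
/- Let X be a finite subset of the unit sphere S^{m-1} ⊂ ℝ^m with Gram matrix M, and suppose the Schur-diameter of M is equal to d and |A(X)| = d. Write A(X) = {θ*_1, ..., θ*_d} with θ*_1 > ... > θ*_d and set θ*_0 = 1. Then for each i ∈ {1,...,d}, the number -K*_i is an eigenvalue of the adjacency matrix A_i of the graph G_i = (X, R_i), where K*_i = ∏_{j∈{1,...,d}, j≠i} (θ*_0 - θ*_j)/(θ*_i - θ*_j). -/
open scoped RealInnerProductSpace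

attribute [local instance] Classical.propDecidable

/-- `A(X)`: the set of inner products between distinct points of `X`. -/
def innerSet (m : ℕ) (X : Finset (EuclideanSpace ℝ (Fin m))) : Set ℝ :=
  {t | ∃ x ∈ X, ∃ y ∈ X, x ≠ y ∧ ⟪x, y⟫ = t}

/-- The Schur-diameter of the Gram matrix of `X`: the least `d` such that some real
polynomial `q` of degree `d`, applied entrywise to the Gram matrix, yields a matrix of
full rank `|X|`. -/
noncomputable def schurDiam (m : ℕ) (X : Finset (EuclideanSpace ℝ (Fin m))) : ℕ :=
  sInf {d : ℕ | ∃ q : Polynomial ℝ, q.natDegree = d ∧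
    (Matrix.of fun x y : X =>
      Polynomial.eval ⟪(x : EuclideanSpace ℝ (Fin m)), (y : EuclideanSpace ℝ (Fin m))⟫ q).rank
        = X.card}

/-- The adjacency matrix `A_i` of the graph `(X, R_i)`, where
`R_i = {(x,y) : ⟪x,y⟫ = t}`. -/
noncomputable def relAdjMatrix (m : ℕ) (X : Finset (EuclideanSpace ℝ (Fin m))) (t : ℝ) :
    Matrix X X ℝ :=
  Matrix.of fun x y : X =>
    if ⟪(x : EuclideanSpace ℝ (Fin m)), (y : EuclideanSpace ℝ (Fin m))⟫ = t then 1 else 0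

/-!
Let `F` be the Lagrange basis polynomial at `θ i` for the nodes `θ 1, …, θ d`: it has degree
`d - 1`, equals `1` at `θ i` and vanishes at the other `θ j`, and `F 1 = K i` because `θ 0 = 1`.
Applied entrywise to the Gram matrix, `F` therefore produces `A_i + K i • 1` (the diagonal
entries are `F ⟪x, x⟫ = F 1`). Since `d - 1` is below the Schur-diameter, this matrix is
singular, and a kernel vector is an eigenvector of `A_i` for `-K i`.
-/

/-- The matrix `q(M∘)` of the paper. -/
noncomputable def gramEval (m : ℕ) (X : Finset (EuclideanSpace ℝ (Fin m))) (q : Polynomial ℝ) :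
    Matrix X X ℝ :=
  Matrix.of fun x y : X =>
    q.eval ⟪(x : EuclideanSpace ℝ (Fin m)), (y : EuclideanSpace ℝ (Fin m))⟫

lemma det_gramEval_eq_zero_of_natDegree_lt_schurDiam {m : ℕ}
    {X : Finset (EuclideanSpace ℝ (Fin m))} {q : Polynomial ℝ} (hq : q.natDegree < schurDiam m X) :
    (gramEval m X q).det = 0 := by
  by_contra hdet
  have hrank : (gramEval m X q).rank = X.card := by
    rw [Matrix.rank_of_det_ne_zero hdet, Fintype.card_coe]
  exact (Nat.sInf_le ⟨q, rfl, hrank⟩ : schurDiam m X ≤ q.natDegree).not_gt hq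

lemma gramEval_eq_relAdjMatrix_add_smul_one {m : ℕ} {X : Finset (EuclideanSpace ℝ (Fin m))}
    (hsph : ∀ x ∈ X, ‖x‖ = 1) {q : Polynomial ℝ} {t : ℝ} (ht : t ≠ 1)
    (hq : ∀ s ∈ innerSet m X, q.eval s = if s = t then 1 else 0) :
    gramEval m X q = relAdjMatrix m X t + q.eval 1 • 1 := by
  ext x y
  rcases eq_or_ne x y with rfl | hxy
  · simp [gramEval, relAdjMatrix, hsph x x.2, ht.symm]
  · have hmem : ⟪(x : EuclideanSpace ℝ (Fin m)), (y : EuclideanSpace ℝ (Fin m))⟫ ∈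
        innerSet m X := ⟨x, x.2, y, y.2, Subtype.coe_ne_coe.mpr hxy, rfl⟩
    simp [gramEval, relAdjMatrix, hq _ hmem, Matrix.one_apply_ne hxy]

lemma Lagrange.eval_basis {ι F : Type*} [Field F] [DecidableEq ι] (s : Finset ι) (v : ι → F)
    (i : ι) (x : F) :
    (Lagrange.basis s v i).eval x = ∏ j ∈ s.erase i, (x - v j) / (v i - v j) := by
  simp only [Lagrange.basis, Lagrange.basisDivisor, Polynomial.eval_prod, Polynomial.eval_mul,
    Polynomial.eval_C, Polynomial.eval_sub, Polynomial.eval_X, div_eq_inv_mul]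

lemma Matrix.exists_mulVec_eq_neg_smul_of_det_add_smul_one_eq_zero {n K : Type*} [Fintype n]
    [DecidableEq n] [Field K] {A : Matrix n n K} {c : K} (h : (A + c • 1).det = 0) :
    ∃ v ≠ 0, A.mulVec v = -c • v := by
  obtain ⟨v, hv0, hv⟩ := Matrix.exists_mulVec_eq_zero_iff.mpr h
  rw [Matrix.add_mulVec, Matrix.smul_mulVec, Matrix.one_mulVec] at hv
  exact ⟨v, hv0, by rw [neg_smul]; exact eq_neg_of_add_eq_zero_left hv⟩

theorem stmt_7_general (m d : ℕ) (X : Finset (EuclideanSpace ℝ (Fin m)))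
    (hsph : ∀ x ∈ X, ‖x‖ = 1)
    (hsd : schurDiam m X = d)
    (θ : Fin (d + 1) → ℝ) (hθ : StrictAnti θ) (hθ0 : θ 0 = 1)
    (hrange : innerSet m X = {t | ∃ i : Fin (d + 1), i ≠ 0 ∧ θ i = t}) :
    ∀ i : Fin (d + 1), i ≠ 0 →
      ∃ v : X → ℝ, v ≠ 0 ∧
        (relAdjMatrix m X (θ i)).mulVec v =
          (-(∏ j ∈ Finset.univ.filter (fun j : Fin (d + 1) => j ≠ 0 ∧ j ≠ i),
              (θ 0 - θ j) / (θ i - θ j))) • v := by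
  intro i hi
  set s := Finset.univ.filter fun j : Fin (d + 1) => j ≠ 0
  have hθs : Set.InjOn θ s := hθ.injective.injOn
  have his : i ∈ s := by simp [s, hi]
  have hdeg : (Lagrange.basis s θ i).natDegree < schurDiam m X := by
    have hs : s.card = d := by simp [s, Finset.filter_ne']
    rw [Lagrange.natDegree_basis hθs his, hs, hsd]
    have := Fin.pos_of_ne_zero hi
    omega
  have hvals : ∀ t ∈ innerSet m X,
      (Lagrange.basis s θ i).eval t = if t = θ i then 1 else 0 := by
    rw [hrange]
    rintro _ ⟨j, hj, rfl⟩
    rcases eq_or_ne j i with rfl | hji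
    · simp [Lagrange.eval_basis_self hθs his]
    · rw [Lagrange.eval_basis_of_ne hji.symm (by simp [s, hj]), if_neg (hθ.injective.ne hji)]
  have hK : (Lagrange.basis s θ i).eval 1 =
      ∏ j ∈ Finset.univ.filter (fun j : Fin (d + 1) => j ≠ 0 ∧ j ≠ i),
        (θ 0 - θ j) / (θ i - θ j) := by
    rw [Lagrange.eval_basis, ← hθ0]
    congr 1
    ext j
    simp [s, and_comm]
  have hθi : θ i ≠ 1 := hθ0 ▸ hθ.injective.ne hi
  rw [← hK]
  apply Matrix.exists_mulVec_eq_neg_smul_of_det_add_smul_one_eq_zero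
  rw [← gramEval_eq_relAdjMatrix_add_smul_one hsph hθi hvals]
  exact det_gramEval_eq_zero_of_natDegree_lt_schurDiam hdeg

/-- Let `X ⊆ S^{m-1}` be a finite set whose Gram matrix has
Schur-diameter `d` and with `|A(X)| = d`; write `A(X) = {θ 1, …, θ d}` with
`θ 1 > ⋯ > θ d` and `θ 0 = 1`.  Then for each `i ∈ {1, …, d}`, the number `-K i` is an
eigenvalue of the adjacency matrix `A_i` of the graph `(X, R_i)`, where
`K i = ∏_{j ∈ {1,…,d}, j ≠ i} (θ 0 - θ j) / (θ i - θ j)`. -/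
theorem stmt_7 (m d : ℕ) (X : Finset (EuclideanSpace ℝ (Fin m)))
    (hsph : ∀ x ∈ X, ‖x‖ = 1) (hcard : 2 ≤ X.card)
    (hsd : schurDiam m X = d)
    (hncard : (innerSet m X).ncard = d)
    (θ : Fin (d + 1) → ℝ) (hθ : StrictAnti θ) (hθ0 : θ 0 = 1)
    (hrange : innerSet m X = {t | ∃ i : Fin (d + 1), i ≠ 0 ∧ θ i = t}) :
    ∀ i : Fin (d + 1), i ≠ 0 →
      ∃ v : X → ℝ, v ≠ 0 ∧
        (relAdjMatrix m X (θ i)).mulVec v =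
          (-(∏ j ∈ Finset.univ.filter (fun j : Fin (d + 1) => j ≠ 0 ∧ j ≠ i),
              (θ 0 - θ j) / (θ i - θ j))) • v :=
  stmt_7_general m d X hsph hsd θ hθ hθ0 hrange
end

section
/- Let X be a finite subset of the unit sphere S^{m-1} ⊂ ℝ^m with Gram matrix M, and suppose the Schur-diameter of M is equal to d and |A(X)| = d. Write A(X) = {θ*_1, ..., θ*_d} with θ*_1 > ... > θ*_d and set θ*_0 = 1. Then for each i ∈ {1,...,d}, the dimension of the eigenspace of the adjacency matrix A_i for the eigenvalue -K*_i (equivalently, the dimension of the kernel of A_i + K*_i·I) is at least |X| - N(m,d-1), where K*_i = ∏_{j∈{1,...,d}, j≠i} (θ*_0 - θ*_j)/(θ*_i - θ*_j) and N(m,d-1) = C(m+d-2, d-1) + C(m+d-3, d-2). -/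
/-!
Let `L` be the Lagrange basis polynomial of degree `d - 1` with `L(θ i) = 1` and `L(θ j) = 0`
for the other `j ≥ 1`. Then `L(θ 0) = K i`, so applying `L` entrywise to the Gram matrix gives
exactly `A_i + K_i I`. Each column `x ↦ L⟪x, y⟫` of this matrix is, on the unit sphere, the
restriction of a sum of homogeneous polynomials of degrees `d - 1` and `d - 2` (pad `⟪x, y⟫ ^ k`
with a power of `‖x‖² = 1`), a space of dimension at most `N(m, d - 1)`. So the rank of
`A_i + K_i I` is at most `N(m, d - 1)`, and rank–nullity bounds its kernel from below.
-/

open scoped RealInnerProductSpace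

attribute [local instance] Classical.propDecidable

/-- The absolute bound `N(m, t) = C(m+t-1, t) + C(m+t-2, t-1)`, the dimension of the space
of restrictions to `S^{m-1}` of real polynomials of degree at most `t` in `m` variables
(with the convention `C(n, -1) = 0` for `t = 0`). -/
def absBound (m t : ℕ) : ℕ :=
  Nat.choose (m + t - 1) t + (if t = 0 then 0 else Nat.choose (m + t - 2) (t - 1))

namespace MvPolynomial

variable {σ : Type*}

theorem homogeneousSubmodule_le_span_monomial_sym {R : Type*} [CommSemiring R] [DecidableEq σ]
    (n : ℕ) :
    homogeneousSubmodule σ R n ≤ Submodule.span R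
      (Set.range fun s : Sym σ n => monomial (Multiset.toFinsupp (s : Multiset σ)) (1 : R)) := by
  intro p hp
  rw [p.as_sum]
  refine Submodule.sum_mem _ fun α hα => ?_
  have hcard : Multiset.card (Finsupp.toMultiset α) = n := by
    rw [Finsupp.card_toMultiset, ← hp (mem_support_iff.mp hα)]
    simp [Finsupp.weight_apply, Finsupp.sum]
  rw [← mul_one (coeff α p), ← smul_eq_mul, ← smul_monomial]
  refine Submodule.smul_mem _ _ (Submodule.subset_span ⟨⟨_, hcard⟩, ?_⟩)
  simp [Finsupp.toMultiset_toFinsupp]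

variable {K : Type*} [Field K] [Fintype σ]

instance finite_homogeneousSubmodule (n : ℕ) : Module.Finite K (homogeneousSubmodule σ K n) :=
  Module.Finite.iff_fg.mpr (homogeneousSubmodule_fg σ K n)

theorem finrank_homogeneousSubmodule_le (n : ℕ) :
    Module.finrank K (homogeneousSubmodule σ K n) ≤ (Fintype.card σ + n - 1).choose n := by
  classical
  let monomials := fun s : Sym σ n => monomial (Multiset.toFinsupp (s : Multiset σ)) (1 : K)
  have := FiniteDimensional.span_of_finite K (Set.finite_range monomials)
  calc Module.finrank K (homogeneousSubmodule σ K n)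
      ≤ (Set.range monomials).finrank K :=
        Submodule.finrank_mono (homogeneousSubmodule_le_span_monomial_sym n)
    _ ≤ Fintype.card (Sym σ n) := finrank_range_le_card _
    _ = _ := Sym.card_sym_eq_choose n

end MvPolynomial

theorem Matrix.rank_add_finrank_ker_mulVecLin {ι κ K : Type*} [Fintype κ] [Field K]
    (A : Matrix ι κ K) :
    A.rank + Module.finrank K (LinearMap.ker A.mulVecLin) = Fintype.card κ := by
  rw [Matrix.rank, LinearMap.finrank_range_add_finrank_ker, Module.finrank_fintype_fun_eq_card]

open MvPolynomial

section PolyFunctions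

variable {m : ℕ}

noncomputable def innerPoly (y : EuclideanSpace ℝ (Fin m)) : MvPolynomial (Fin m) ℝ :=
  ∑ j, C (y j) * X j

noncomputable def normSqPoly : MvPolynomial (Fin m) ℝ :=
  ∑ j, X j ^ 2

theorem isHomogeneous_innerPoly (y : EuclideanSpace ℝ (Fin m)) :
    (innerPoly y).IsHomogeneous 1 :=
  IsHomogeneous.sum _ _ _ fun j _ => (isHomogeneous_X ℝ j).C_mul _

theorem isHomogeneous_normSqPoly : (normSqPoly : MvPolynomial (Fin m) ℝ).IsHomogeneous 2 :=
  IsHomogeneous.sum _ _ _ fun j _ => by simpa using (isHomogeneous_X ℝ j).pow 2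

@[simp]
theorem eval_innerPoly (x y : EuclideanSpace ℝ (Fin m)) : eval x.ofLp (innerPoly y) = ⟪x, y⟫ := by
  simp [innerPoly, PiLp.inner_apply, mul_comm]

@[simp]
theorem eval_normSqPoly (x : EuclideanSpace ℝ (Fin m)) : eval x.ofLp normSqPoly = ‖x‖ ^ 2 := by
  simp [normSqPoly, EuclideanSpace.norm_sq_eq]

variable (X : Finset (EuclideanSpace ℝ (Fin m)))

noncomputable def evalOn : MvPolynomial (Fin m) ℝ →ₗ[ℝ] (X → ℝ) :=
  LinearMap.pi fun x => (aeval (x : EuclideanSpace ℝ (Fin m)).ofLp).toLinearMap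

@[simp]
theorem evalOn_apply (p : MvPolynomial (Fin m) ℝ) (x : X) :
    evalOn X p x = eval (x : EuclideanSpace ℝ (Fin m)).ofLp p := by
  simp [evalOn, aeval_eq_eval]

/-- On the unit sphere these are the restrictions of all polynomials of degree at most `t`. -/
noncomputable def polyFunctionsOn (t : ℕ) : Submodule ℝ (X → ℝ) :=
  (homogeneousSubmodule (Fin m) ℝ t ⊔ homogeneousSubmodule (Fin m) ℝ (t - 1)).map (evalOn X)

theorem finrank_polyFunctionsOn_le (t : ℕ) :
    Module.finrank ℝ (polyFunctionsOn X t) ≤ absBound m t := by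
  refine (Submodule.finrank_map_le _ _).trans ?_
  rcases t with _ | t
  · rw [zero_tsub, sup_idem]
    simpa [absBound] using finrank_homogeneousSubmodule_le (σ := Fin m) (K := ℝ) 0
  · refine (Submodule.finrank_add_le_finrank_add_finrank _ _).trans ?_
    have h1 := finrank_homogeneousSubmodule_le (σ := Fin m) (K := ℝ) (t + 1)
    have h2 := finrank_homogeneousSubmodule_le (σ := Fin m) (K := ℝ) t
    rw [Fintype.card_fin] at h1 h2
    rw [absBound, if_neg t.succ_ne_zero, add_tsub_cancel_right,
      show m + (t + 1) - 2 = m + t - 1 by omega]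
    omega

variable {X}

theorem inner_pow_mem_polyFunctionsOn (hX : ∀ x ∈ X, ‖x‖ = 1) (y : EuclideanSpace ℝ (Fin m))
    {k t : ℕ} (hk : k ≤ t) :
    (fun x : X => ⟪(x : EuclideanSpace ℝ (Fin m)), y⟫ ^ k) ∈ polyFunctionsOn X t := by
  set e := (t - k) / 2
  have hP : (innerPoly y ^ k * normSqPoly ^ e).IsHomogeneous (k + 2 * e) := by
    simpa [mul_comm 2 e] using
      ((isHomogeneous_innerPoly y).pow k).mul (isHomogeneous_normSqPoly.pow e)
  refine ⟨innerPoly y ^ k * normSqPoly ^ e, ?_, funext fun x => ?_⟩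
  · rcases (by omega : k + 2 * e = t ∨ k + 2 * e = t - 1) with h | h
    · exact Submodule.mem_sup_left (h ▸ hP)
    · exact Submodule.mem_sup_right (h ▸ hP)
  · simp [hX x x.2]

theorem eval_inner_mem_polyFunctionsOn (hX : ∀ x ∈ X, ‖x‖ = 1) (y : EuclideanSpace ℝ (Fin m))
    {q : Polynomial ℝ} {t : ℕ} (hq : q.natDegree ≤ t) :
    (fun x : X => q.eval ⟪(x : EuclideanSpace ℝ (Fin m)), y⟫) ∈ polyFunctionsOn X t := by
  have hsum : (fun x : X => q.eval ⟪(x : EuclideanSpace ℝ (Fin m)), y⟫) =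
      ∑ k ∈ Finset.range (t + 1),
        q.coeff k • fun x : X => ⟪(x : EuclideanSpace ℝ (Fin m)), y⟫ ^ k := by
    funext x
    simp [Polynomial.eval_eq_sum_range' (Nat.lt_succ_of_le hq)]
  rw [hsum]
  refine Submodule.sum_mem _ fun k hk => Submodule.smul_mem _ _ ?_
  exact inner_pow_mem_polyFunctionsOn hX y (Nat.lt_succ_iff.mp (Finset.mem_range.mp hk))

theorem rank_of_eval_inner_le_absBound (hX : ∀ x ∈ X, ‖x‖ = 1) {q : Polynomial ℝ} {t : ℕ}
    (hq : q.natDegree ≤ t) :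
    (Matrix.of fun x y : X =>
      q.eval ⟪(x : EuclideanSpace ℝ (Fin m)), (y : EuclideanSpace ℝ (Fin m))⟫).rank
        ≤ absBound m t := by
  rw [Matrix.rank_eq_finrank_span_cols]
  refine (Submodule.finrank_mono (Submodule.span_le.mpr ?_)).trans (finrank_polyFunctionsOn_le X t)
  rintro _ ⟨y, rfl⟩
  exact eval_inner_mem_polyFunctionsOn hX y hq

theorem card_sub_absBound_le_finrank_ker (hX : ∀ x ∈ X, ‖x‖ = 1) {q : Polynomial ℝ} {t : ℕ}
    (hq : q.natDegree ≤ t) :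
    (X.card : ℤ) - absBound m t ≤ Module.finrank ℝ (LinearMap.ker (Matrix.of fun x y : X =>
      q.eval ⟪(x : EuclideanSpace ℝ (Fin m)), (y : EuclideanSpace ℝ (Fin m))⟫).mulVecLin) := by
  have hsum := Matrix.rank_add_finrank_ker_mulVecLin (Matrix.of fun x y : X =>
    q.eval ⟪(x : EuclideanSpace ℝ (Fin m)), (y : EuclideanSpace ℝ (Fin m))⟫)
  rw [Fintype.card_coe] at hsum
  have := rank_of_eval_inner_le_absBound hX hq
  omega

theorem relAdjMatrix_add_smul_one_eq (hX : ∀ x ∈ X, ‖x‖ = 1) {q : Polynomial ℝ} {t : ℝ}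
    (ht : t ≠ 1) (hqt : q.eval t = 1) (hq : ∀ s ∈ innerSet m X, s ≠ t → q.eval s = 0) :
    relAdjMatrix m X t + q.eval 1 • 1 = Matrix.of fun x y : X =>
      q.eval ⟪(x : EuclideanSpace ℝ (Fin m)), (y : EuclideanSpace ℝ (Fin m))⟫ := by
  ext x y
  by_cases hxy : x = y
  · subst hxy
    simp [relAdjMatrix, hX x x.2, ht.symm]
  · have hmem : ⟪(x : EuclideanSpace ℝ (Fin m)), (y : EuclideanSpace ℝ (Fin m))⟫ ∈ innerSet m X :=
      ⟨x, x.2, y, y.2, Subtype.coe_injective.ne hxy, rfl⟩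
    by_cases h : ⟪(x : EuclideanSpace ℝ (Fin m)), (y : EuclideanSpace ℝ (Fin m))⟫ = t
    · simp [relAdjMatrix, hxy, h, hqt]
    · simp [relAdjMatrix, hxy, h, hq _ hmem h]

end PolyFunctions

theorem stmt_8_general (m d : ℕ) (X : Finset (EuclideanSpace ℝ (Fin m)))
    (hsph : ∀ x ∈ X, ‖x‖ = 1)
    (θ : Fin (d + 1) → ℝ) (hθ : StrictAnti θ) (hθ0 : θ 0 = 1)
    (hrange : innerSet m X = {t | ∃ i : Fin (d + 1), i ≠ 0 ∧ θ i = t}) :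
    ∀ i : Fin (d + 1), i ≠ 0 →
      (X.card : ℤ) - (absBound m (d - 1) : ℤ) ≤
        (Module.finrank ℝ
          (LinearMap.ker
            (Matrix.mulVecLin
              (relAdjMatrix m X (θ i) +
                (∏ j ∈ Finset.univ.filter (fun j : Fin (d + 1) => j ≠ 0 ∧ j ≠ i),
                  (θ 0 - θ j) / (θ i - θ j)) • (1 : Matrix X X ℝ)))) : ℤ) := by
  intro i hi
  set nodes := Finset.univ.erase (0 : Fin (d + 1))
  have hinj : Set.InjOn θ nodes := hθ.injective.injOn
  have hi' : i ∈ nodes := Finset.mem_erase.mpr ⟨hi, Finset.mem_univ i⟩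
  set L := Lagrange.basis nodes θ i
  have hK : ∏ j ∈ Finset.univ.filter (fun j : Fin (d + 1) => j ≠ 0 ∧ j ≠ i),
      (θ 0 - θ j) / (θ i - θ j) = L.eval 1 := by
    rw [← hθ0]
    simp only [L, Lagrange.basis, Polynomial.eval_prod]
    refine Finset.prod_congr (by ext j; simp [nodes, and_comm]) fun j _ => ?_
    simp [Lagrange.basisDivisor, div_eq_inv_mul]
  have hL : ∀ s ∈ innerSet m X, s ≠ θ i → L.eval s = 0 := by
    rintro s hs hsi
    obtain ⟨j, hj, rfl⟩ := hrange ▸ hs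
    exact Lagrange.eval_basis_of_ne (fun h => hsi (h ▸ rfl)) (by simpa [nodes] using hj)
  have hθi : θ i ≠ 1 := hθ0 ▸ (hθ (Fin.pos_of_ne_zero hi)).ne
  have hdeg : L.natDegree ≤ d - 1 := by
    rw [Lagrange.natDegree_basis hinj hi', Finset.card_erase_of_mem (Finset.mem_univ _),
      Finset.card_univ, Fintype.card_fin, add_tsub_cancel_right]
  rw [hK, relAdjMatrix_add_smul_one_eq hsph hθi (Lagrange.eval_basis_self hinj hi') hL]
  exact card_sub_absBound_le_finrank_ker hsph hdeg

/-- Let `X ⊆ S^{m-1}` be a finite set whose Gram matrix has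
Schur-diameter `d` and with `|A(X)| = d`; write `A(X) = {θ 1, …, θ d}` with
`θ 1 > ⋯ > θ d` and `θ 0 = 1`.  Then for each `i ∈ {1, …, d}`, the dimension of the
kernel of `A_i + K i • I` is at least `|X| - N(m, d-1)`, where
`K i = ∏_{j ∈ {1,…,d}, j ≠ i} (θ 0 - θ j) / (θ i - θ j)` and
`N(m, d-1) = C(m+d-2, d-1) + C(m+d-3, d-2)`. -/
theorem stmt_8 (m d : ℕ) (X : Finset (EuclideanSpace ℝ (Fin m)))
    (hsph : ∀ x ∈ X, ‖x‖ = 1) (hcard : 2 ≤ X.card)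
    (hsd : schurDiam m X = d)
    (hncard : (innerSet m X).ncard = d)
    (θ : Fin (d + 1) → ℝ) (hθ : StrictAnti θ) (hθ0 : θ 0 = 1)
    (hrange : innerSet m X = {t | ∃ i : Fin (d + 1), i ≠ 0 ∧ θ i = t}) :
    ∀ i : Fin (d + 1), i ≠ 0 →
      (X.card : ℤ) - (absBound m (d - 1) : ℤ) ≤
        (Module.finrank ℝ
          (LinearMap.ker
            (Matrix.mulVecLin
              (relAdjMatrix m X (θ i) +
                (∏ j ∈ Finset.univ.filter (fun j : Fin (d + 1) => j ≠ 0 ∧ j ≠ i),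
                  (θ 0 - θ j) / (θ i - θ j)) • (1 : Matrix X X ℝ)))) : ℤ) :=
  stmt_8_general m d X hsph θ hθ hθ0 hrange
end

section
/- Let X be a finite subset of the unit sphere S^{m-1} ⊂ ℝ^m with |A(X)| ≤ d. If |X| > N(m,d-1) = C(m+d-2, d-1) + C(m+d-3, d-2), then the Schur-diameter of the Gram matrix M of X is equal to d. -/
open scoped RealInnerProductSpace

/-!
Let `A = A(X)`. A polynomial `q` of degree `d` vanishing on `A` with `q(1) ≠ 0` exists since
`|A| ≤ d` and `1 ∉ A`; then `q(M∘) = q(1) • 1` has full rank. Conversely, if `deg p ≤ d - 1`,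
every column `x ↦ p(⟪x, y⟫)` of `p(M∘)` is a polynomial of degree `≤ d - 1` in the coordinates
of `x`; on the sphere `∑ xₖ² = 1` lets one raise the degree of a monomial by two, so these
columns lie in the span of the `N(m, d - 1)` monomials of degree `d - 1` and `d - 2`.
Hence `rank p(M∘) ≤ N(m, d - 1) < |X|`.
-/

open Polynomial

theorem Polynomial.exists_natDegree_eq_eval_ne_zero_eval_eq_zero {R : Type*} [CommRing R]
    [IsDomain R] {A : Finset R} {b : R} (hb : b ∉ A) {d : ℕ} (hA : A.card ≤ d) :
    ∃ q : R[X], q.natDegree = d ∧ q.eval b ≠ 0 ∧ ∀ a ∈ A, q.eval a = 0 := by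
  classical
  refine ⟨(∏ a ∈ A, (X - C a)) * (X - C (b - 1)) ^ (d - A.card), ?_, ?_, fun a ha => ?_⟩
  · rw [(monic_prod_of_monic _ _ fun a _ => monic_X_sub_C a).natDegree_mul
      ((monic_X_sub_C _).pow _), (monic_X_sub_C _).natDegree_pow]
    simp only [natDegree_finsetProd_X_sub_C_eq_card, natDegree_X_sub_C]
    omega
  · simpa [eval_prod, Finset.prod_eq_zero_iff, sub_eq_zero] using hb
  · simp only [eval_mul, eval_prod, eval_sub, eval_X, eval_C]
    rw [Finset.prod_eq_zero ha (sub_self a), zero_mul]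

theorem Matrix.rank_le_card_of_col_mem_span {m n ι R : Type*} [Fintype n] [Fintype ι] [Field R]
    (A : Matrix m n R) (b : ι → m → R) (h : ∀ j, A.col j ∈ Submodule.span R (Set.range b)) :
    A.rank ≤ Fintype.card ι := by
  have := Module.Finite.span_of_finite R (Set.finite_range b)
  rw [rank_eq_finrank_span_cols]
  exact (Submodule.finrank_mono (Submodule.span_le.mpr (Set.range_subset_iff.mpr h))).trans
    (finrank_range_le_card b)

section SphereMonomials

variable {ι : Type*} {m : ℕ} (u : ι → EuclideanSpace ℝ (Fin m))

def monomialFun (s : Multiset (Fin m)) : ι → ℝ :=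
  fun i => (s.map (u i ·)).prod

theorem inner_pow_mem_span_monomialFun (y : EuclideanSpace ℝ (Fin m)) (k : ℕ) :
    (fun i => ⟪u i, y⟫ ^ k) ∈ Submodule.span ℝ (monomialFun u '' {s | Multiset.card s = k}) := by
  have hexpand : (fun i => ⟪u i, y⟫ ^ k) = ∑ g : Fin k → Fin m,
      (∏ j, y (g j)) • monomialFun u (Finset.univ.val.map g) := by
    funext i
    simp only [Finset.sum_apply, Pi.smul_apply, smul_eq_mul, monomialFun, Multiset.map_map]
    rw [← Fin.prod_const, PiLp.inner_apply, Fintype.prod_sum]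
    refine Finset.sum_congr rfl fun g _ => ?_
    simp [Finset.prod_mul_distrib, List.prod_ofFn]
  rw [hexpand]
  exact Submodule.sum_mem _ fun g _ => Submodule.smul_mem _ _
    (Submodule.subset_span ⟨_, by simp, rfl⟩)

theorem eval_inner_mem_span_monomialFun (y : EuclideanSpace ℝ (Fin m)) {q : ℝ[X]} {t : ℕ}
    (hq : q.natDegree ≤ t) :
    (fun i => q.eval ⟪u i, y⟫) ∈
      Submodule.span ℝ (monomialFun u '' {s | Multiset.card s ≤ t}) := by
  have hexpand : (fun i => q.eval ⟪u i, y⟫) =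
      ∑ k ∈ Finset.range (t + 1), q.coeff k • fun i => ⟪u i, y⟫ ^ k := by
    funext i
    simp only [Finset.sum_apply, Pi.smul_apply, smul_eq_mul]
    exact eval_eq_sum_range' (Nat.lt_succ_of_le hq) _
  rw [hexpand]
  refine Submodule.sum_mem _ fun k hk => Submodule.smul_mem _ _ ?_
  refine Submodule.span_mono (Set.image_mono fun s hs => ?_)
    (inner_pow_mem_span_monomialFun u y k)
  exact (Set.mem_ofPred.mp hs).trans_le (Nat.lt_succ_iff.mp (Finset.mem_range.mp hk))

variable {u}

theorem monomialFun_eq_sum_cons_cons (hu : ∀ i, ‖u i‖ = 1) (s : Multiset (Fin m)) :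
    monomialFun u s = ∑ k, monomialFun u (k ::ₘ k ::ₘ s) := by
  funext i
  have hsq : ∑ k, u i k * u i k = 1 := by
    have h := real_inner_self_eq_norm_sq (u i)
    rw [hu i, PiLp.inner_apply] at h
    simpa [sq] using h
  simp only [monomialFun, Multiset.map_cons, Multiset.prod_cons, Finset.sum_apply, ← mul_assoc,
    ← Finset.sum_mul, hsq, one_mul]

variable (u) in
def topMonomialFun (t : ℕ) : Sym (Fin m) (t + 1) ⊕ Sym (Fin m) t → ι → ℝ :=
  fun s => monomialFun u (s.elim (↑) (↑))

theorem monomialFun_mem_span_topMonomialFun (hu : ∀ i, ‖u i‖ = 1) {t : ℕ} {s : Multiset (Fin m)}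
    (hs : Multiset.card s ≤ t + 1) :
    monomialFun u s ∈ Submodule.span ℝ (Set.range (topMonomialFun u t)) := by
  induction hn : t + 1 - Multiset.card s using Nat.strong_induction_on generalizing s with
  | _ n ih =>
    rcases Nat.lt_or_ge (t + 1) (Multiset.card s + 2) with hlt | hge
    · obtain hst | hst : Multiset.card s = t + 1 ∨ Multiset.card s = t := by omega
      · exact Submodule.subset_span ⟨.inl ⟨s, hst⟩, rfl⟩
      · exact Submodule.subset_span ⟨.inr ⟨s, hst⟩, rfl⟩
    · rw [monomialFun_eq_sum_cons_cons hu]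
      refine Submodule.sum_mem _ fun k _ => ih _ ?_ ?_ rfl <;>
        simp only [Multiset.card_cons] <;> omega

theorem rank_eval_inner_le_absBound {κ : Type*} [Fintype κ] (hu : ∀ i, ‖u i‖ = 1)
    (w : κ → EuclideanSpace ℝ (Fin m)) {q : ℝ[X]} {t : ℕ} (hq : q.natDegree ≤ t) :
    (Matrix.of fun i j => q.eval ⟪u i, w j⟫).rank ≤ absBound m t := by
  cases t with
  | zero =>
    obtain ⟨c, rfl⟩ := natDegree_eq_zero.mp (Nat.le_zero.mp hq)
    have hconst : (Matrix.of fun i j => (C c).eval ⟪u i, w j⟫) =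
        Matrix.vecMulVec (fun _ => c) 1 := by
      ext
      simp [Matrix.vecMulVec_apply]
    rw [hconst]
    exact (Matrix.rank_vecMulVec_le _ _).trans_eq (by simp [absBound])
  | succ t =>
    have hspan : Submodule.span ℝ (monomialFun u '' {s | Multiset.card s ≤ t + 1}) ≤
        Submodule.span ℝ (Set.range (topMonomialFun u t)) :=
      Submodule.span_le.mpr <| Set.image_subset_iff.mpr fun s hs =>
        monomialFun_mem_span_topMonomialFun hu hs
    refine (Matrix.rank_le_card_of_col_mem_span _ _
      fun j => hspan (eval_inner_mem_span_monomialFun u (w j) hq)).trans_eq ?_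
    simp [Fintype.card_sum, Sym.card_sym_eq_choose, absBound,
      show m + (t + 1) - 2 = m + t - 1 by omega]

end SphereMonomials

theorem innerSet_finite (m : ℕ) (X : Finset (EuclideanSpace ℝ (Fin m))) :
    (innerSet m X).Finite :=
  (X.finite_toSet.image2 _ X.finite_toSet).subset
    fun _ ⟨x, hx, y, hy, _, hxy⟩ => ⟨x, hx, y, hy, hxy⟩

section

variable {m : ℕ} {X : Finset (EuclideanSpace ℝ (Fin m))}

theorem one_notMem_innerSet (hsph : ∀ x ∈ X, ‖x‖ = 1) : 1 ∉ innerSet m X :=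
  fun ⟨x, hx, y, hy, hne, h1⟩ =>
    hne ((inner_eq_one_iff_of_norm_eq_one (hsph x hx) (hsph y hy)).mp h1)

theorem gram_eval_eq_smul_one (hsph : ∀ x ∈ X, ‖x‖ = 1) {q : ℝ[X]}
    (hq : ∀ a ∈ innerSet m X, q.eval a = 0) :
    (Matrix.of fun x y : X => q.eval ⟪(x : EuclideanSpace ℝ (Fin m)), y⟫) = q.eval 1 • 1 := by
  ext x y
  by_cases hxy : x = y
  · subst hxy
    simp [hsph x x.2]
  · simpa [Matrix.one_apply_ne hxy] using hq _ ⟨x, x.2, y, y.2, Subtype.coe_ne_coe.mpr hxy, rfl⟩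

theorem rank_gram_eval_eq_card (hsph : ∀ x ∈ X, ‖x‖ = 1) {q : ℝ[X]}
    (hq : ∀ a ∈ innerSet m X, q.eval a = 0) (hq1 : q.eval 1 ≠ 0) :
    (Matrix.of fun x y : X => q.eval ⟪(x : EuclideanSpace ℝ (Fin m)), y⟫).rank = X.card := by
  rw [gram_eval_eq_smul_one hsph hq, ← Algebra.algebraMap_eq_smul_one, Matrix.rank_of_isUnit _
    (hq1.isUnit.map _), Fintype.card_coe]

end

theorem stmt_9_general (m d : ℕ) (X : Finset (EuclideanSpace ℝ (Fin m)))
    (hsph : ∀ x ∈ X, ‖x‖ = 1)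
    (hncard : (innerSet m X).ncard ≤ d)
    (hbig : X.card > absBound m (d - 1)) :
    schurDiam m X = d := by
  have hfin := innerSet_finite m X
  obtain ⟨q, hqdeg, hq1, hqA⟩ := exists_natDegree_eq_eval_ne_zero_eval_eq_zero
    (A := hfin.toFinset) (b := 1) (d := d) (by simpa using one_notMem_innerSet hsph)
    (by rwa [← Set.ncard_eq_toFinset_card _ hfin])
  refine IsLeast.csInf_eq ⟨⟨q, hqdeg, rank_gram_eval_eq_card hsph
    (fun a ha => hqA a (hfin.mem_toFinset.mpr ha)) hq1⟩, ?_⟩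
  rintro e ⟨p, rfl, hp⟩
  by_contra! hlt
  have := rank_eval_inner_le_absBound (u := Subtype.val) (fun x : X => hsph x.1 x.2)
    (Subtype.val : X → _) (Nat.le_sub_one_of_lt hlt)
  omega

/-- Let `X ⊆ S^{m-1}` be a finite set with `|A(X)| ≤ d`.  If
`|X| > N(m, d-1) = C(m+d-2, d-1) + C(m+d-3, d-2)`, then the Schur-diameter of the
Gram matrix of `X` is equal to `d`. -/
theorem stmt_9 (m d : ℕ) (X : Finset (EuclideanSpace ℝ (Fin m)))
    (hsph : ∀ x ∈ X, ‖x‖ = 1) (hcard : 2 ≤ X.card)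
    (hncard : (innerSet m X).ncard ≤ d)
    (hbig : X.card > absBound m (d - 1)) :
    schurDiam m X = d :=
  stmt_9_general m d X hsph hncard hbig
end

section
/- Let X be a finite subset of the unit sphere S^{m-1} ⊂ ℝ^m with |A(X)| ≤ d. If |X| > N(m,d-1) = C(m+d-2, d-1) + C(m+d-3, d-2), then |A(X)| = d, i.e., exactly d inner products occur between distinct points of X. -/
/-!
If fewer than `d` inner products occur, then for each `x ∈ X` the function
`y ↦ ∏_{c ∈ A(X)} (⟪x, y⟫ - c)` vanishes on `X \ {x}` but not at `x` (as `⟪x, x⟫ = 1 ∉ A(X)`),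
so these `|X|` functions on `X` are linearly independent. Each is a polynomial of degree at most
`d - 1`. On the unit sphere `∑ yᵢ² = 1`, so multiplying a homogeneous component by a power of
`∑ yᵢ²` shows that every polynomial function of degree at most `t` is a sum of homogeneous ones
of degrees `t` and `t - 1`; counting monomials, these span a space of dimension at most
`N(m, t)`. Hence `|X| ≤ N(m, d - 1)`.
-/

open scoped RealInnerProductSpace

open MvPolynomial Module

namespace MvPolynomial

variable {σ K : Type*} [Field K]

instance [Finite σ] (n : ℕ) : Module.Finite K (homogeneousSubmodule σ K n) :=
  Module.Finite.iff_fg.mpr (homogeneousSubmodule_fg σ K n)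

theorem finrank_homogeneousSubmodule_le_s10 [Fintype σ] (n : ℕ) :
    finrank K (homogeneousSubmodule σ K n) ≤ (Fintype.card σ).multichoose n := by
  classical
  have hspan : homogeneousSubmodule σ K n =
      Submodule.span K
        (((Finset.univ.finsuppAntidiag n).image (monomial · (1 : K)) : Finset (MvPolynomial σ K)) :
          Set (MvPolynomial σ K)) := by
    rw [homogeneousSubmodule_eq_finsupp_supported, AddMonoidAlgebra.supported_eq_span_single,
      Finset.coe_image]
    congr 2
    ext d
    simp [Finsupp.degree_eq_sum]
  rw [hspan, ← Finset.card_univ, ← Finset.card_finsuppAntidiag_nat_eq_multichoose]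
  exact (finrank_span_finset_le_card _).trans Finset.card_image_le

end MvPolynomial

namespace EuclideanSpace

variable {ι : Type*} (S : Set (EuclideanSpace ℝ ι))

noncomputable def evalOn : MvPolynomial ι ℝ →ₐ[ℝ] (S → ℝ) :=
  AlgHom.pi fun x => aeval fun i => (x : EuclideanSpace ℝ ι) i

@[simp]
theorem evalOn_apply (p : MvPolynomial ι ℝ) (x : S) :
    evalOn S p x = eval (fun i => (x : EuclideanSpace ℝ ι) i) p := by
  simp [evalOn, AlgHom.pi_apply]

noncomputable def polyFunctions (t : ℕ) : Submodule ℝ (S → ℝ) :=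
  (restrictTotalDegree ι ℝ t).map (evalOn S).toLinearMap

noncomputable def homogeneousFunctions (k : ℕ) : Submodule ℝ (S → ℝ) :=
  (homogeneousSubmodule ι ℝ k).map (evalOn S).toLinearMap

instance [Finite ι] (k : ℕ) : Module.Finite ℝ (homogeneousFunctions S k) := by
  unfold homogeneousFunctions; infer_instance

variable {S} [Fintype ι]

theorem evalOn_sum_X_sq (hS : ∀ x ∈ S, ‖x‖ = 1) : evalOn S (∑ i, X i ^ 2) = 1 := by
  funext x
  have hx : ∑ i, (x : EuclideanSpace ℝ ι) i ^ 2 = 1 := by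
    simpa [EuclideanSpace.norm_eq, Real.sqrt_eq_one] using hS x x.2
  simpa using hx

theorem homogeneousFunctions_le_add_two (hS : ∀ x ∈ S, ‖x‖ = 1) (k : ℕ) :
    homogeneousFunctions S k ≤ homogeneousFunctions S (k + 2) := by
  rintro _ ⟨p, hp, rfl⟩
  refine ⟨p * ∑ i, X i ^ 2, hp.mul (IsHomogeneous.sum _ _ _ fun i _ => isHomogeneous_X_pow i 2), ?_⟩
  simp [evalOn_sum_X_sq hS]

theorem homogeneousFunctions_le_sup (hS : ∀ x ∈ S, ‖x‖ = 1) {j t : ℕ} (hjt : j ≤ t) :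
    homogeneousFunctions S j ≤ homogeneousFunctions S t ⊔ homogeneousFunctions S (t - 1) := by
  have hle : ∀ q, homogeneousFunctions S j ≤ homogeneousFunctions S (j + 2 * q) := by
    intro q
    induction q with
    | zero => rfl
    | succ q ih => exact ih.trans (homogeneousFunctions_le_add_two hS _)
  rcases Nat.even_or_odd' (t - j) with ⟨q, hq | hq⟩
  · exact (hle q).trans (le_of_eq (by congr 1; omega)) |>.trans le_sup_left
  · exact (hle q).trans (le_of_eq (by congr 1; omega)) |>.trans le_sup_right

theorem polyFunctions_le_sup (hS : ∀ x ∈ S, ‖x‖ = 1) (t : ℕ) :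
    polyFunctions S t ≤ homogeneousFunctions S t ⊔ homogeneousFunctions S (t - 1) := by
  rw [polyFunctions, restrictTotalDegree, restrictSupport_eq_span, Submodule.map_span_le]
  rintro _ ⟨d, hd, rfl⟩
  exact homogeneousFunctions_le_sup hS hd ⟨_, isHomogeneous_monomial 1 rfl, rfl⟩

theorem finrank_polyFunctions_le (hS : ∀ x ∈ S, ‖x‖ = 1) (t : ℕ) :
    finrank ℝ (polyFunctions S t) ≤ absBound (Fintype.card ι) t := by
  have hhom (k : ℕ) : finrank ℝ (homogeneousFunctions S k) ≤ (Fintype.card ι).multichoose k :=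
    (Submodule.finrank_map_le _ _).trans (finrank_homogeneousSubmodule_le_s10 k)
  refine (Submodule.finrank_mono (polyFunctions_le_sup hS t)).trans ?_
  rcases t with _ | t
  · rw [Nat.zero_sub, sup_idem]
    simpa [absBound] using hhom 0
  · refine (Submodule.finrank_add_le_finrank_add_finrank _ _).trans ?_
    rw [absBound, if_neg t.succ_ne_zero, Nat.add_sub_cancel,
      show Fintype.card ι + (t + 1) - 2 = Fintype.card ι + t - 1 by omega,
      ← Nat.multichoose_eq, ← Nat.multichoose_eq]
    exact add_le_add (hhom _) (hhom _)

noncomputable def innerPoly (x : EuclideanSpace ℝ ι) : MvPolynomial ι ℝ :=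
  ∑ i, C (x i) * X i

theorem eval_innerPoly (x y : EuclideanSpace ℝ ι) : eval (fun i => y i) (innerPoly x) = ⟪x, y⟫ := by
  simp [innerPoly, PiLp.inner_apply, mul_comm]

theorem isHomogeneous_innerPoly (x : EuclideanSpace ℝ ι) : (innerPoly x).IsHomogeneous 1 :=
  IsHomogeneous.sum _ _ _ fun i _ => isHomogeneous_C_mul_X _ i

theorem prod_inner_sub_mem_polyFunctions {S : Set (EuclideanSpace ℝ ι)} (x : EuclideanSpace ℝ ι)
    {A : Finset ℝ} {t : ℕ} (ht : A.card ≤ t) :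
    (fun y : S => ∏ c ∈ A, (⟪x, (y : EuclideanSpace ℝ ι)⟫ - c)) ∈ polyFunctions S t := by
  refine ⟨∏ c ∈ A, (innerPoly x - C c), ?_, ?_⟩
  · rw [SetLike.mem_coe, mem_restrictTotalDegree]
    refine (totalDegree_finsetProd _ _).trans (le_trans ?_ ht)
    rw [Finset.card_eq_sum_ones]
    refine Finset.sum_le_sum fun c _ => (totalDegree_sub _ _).trans ?_
    simpa using (isHomogeneous_innerPoly x).totalDegree_le
  · funext y
    simp [eval_innerPoly]

end EuclideanSpace

theorem linearIndependent_of_diag_ne_zero {α K : Type*} [Field K] {F : α → α → K}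
    (hdiag : ∀ x, F x x ≠ 0) (hoff : ∀ x y, x ≠ y → F x y = 0) : LinearIndependent K F := by
  rw [linearIndependent_iff']
  intro s g hg i hi
  have hgi := congrFun hg i
  simp only [Finset.sum_apply, Pi.smul_apply, smul_eq_mul, Pi.zero_apply] at hgi
  rw [Finset.sum_eq_single_of_mem i hi fun j _ hji => by rw [hoff j i hji, mul_zero]] at hgi
  exact (mul_eq_zero.1 hgi).resolve_right (hdiag i)

theorem innerSet_eq_image_offDiag (m : ℕ) (X : Finset (EuclideanSpace ℝ (Fin m))) :
    innerSet m X = ↑(X.offDiag.image fun p => ⟪p.1, p.2⟫) := by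
  ext t
  simp [innerSet, and_assoc]

open EuclideanSpace in
theorem card_le_absBound {m t : ℕ} {X : Finset (EuclideanSpace ℝ (Fin m))}
    (hX : ∀ x ∈ X, ‖x‖ = 1) (ht : (innerSet m X).ncard ≤ t) : X.card ≤ absBound m t := by
  classical
  set A := X.offDiag.image fun p => ⟪p.1, p.2⟫
  have hAt : A.card ≤ t := by rwa [innerSet_eq_image_offDiag, Set.ncard_coe_finset] at ht
  let F (x y : ↥(X : Set (EuclideanSpace ℝ (Fin m)))) : ℝ := ∏ c ∈ A, (⟪x.1, y.1⟫ - c)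
  have hdiag (x) : F x x ≠ 0 := by
    refine Finset.prod_ne_zero_iff.2 fun c hc => sub_ne_zero.2 ?_
    obtain ⟨⟨u, v⟩, huv, rfl⟩ := Finset.mem_image.1 hc
    obtain ⟨hu, hv, hne⟩ := Finset.mem_offDiag.1 huv
    rw [real_inner_self_eq_norm_sq, hX x x.2, one_pow]
    exact fun h => hne ((inner_eq_one_iff_of_norm_eq_one (hX u hu) (hX v hv)).1 h.symm)
  have hoff (x y) (hxy : x ≠ y) : F x y = 0 :=
    Finset.prod_eq_zero (Finset.mem_image_of_mem _ (Finset.mem_offDiag (x := (x.1, y.1)) |>.2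
      ⟨x.2, y.2, Subtype.coe_injective.ne hxy⟩)) (sub_self _)
  have hli := linearIndependent_of_diag_ne_zero hdiag hoff
  calc X.card = finrank ℝ (Submodule.span ℝ (Set.range F)) := by
        rw [finrank_span_eq_card hli]; simp
    _ ≤ finrank ℝ (polyFunctions (X : Set (EuclideanSpace ℝ (Fin m))) t) :=
        Submodule.finrank_mono (Submodule.span_le.2 (Set.range_subset_iff.2 fun x =>
          prod_inner_sub_mem_polyFunctions _ hAt))
    _ ≤ absBound m t := by
        simpa using finrank_polyFunctions_le (S := (X : Set (EuclideanSpace ℝ (Fin m)))) hX t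

theorem stmt_10_general (m d : ℕ) (X : Finset (EuclideanSpace ℝ (Fin m)))
    (hsph : ∀ x ∈ X, ‖x‖ = 1)
    (hncard : (innerSet m X).ncard ≤ d)
    (hbig : X.card > absBound m (d - 1)) :
    (innerSet m X).ncard = d := by
  refine hncard.antisymm (not_lt.1 fun hlt => ?_)
  exact (card_le_absBound hsph (Nat.le_sub_one_of_lt hlt)).not_gt hbig

/-- Let `X ⊆ S^{m-1}` be a finite set with `|A(X)| ≤ d`.  If
`|X| > N(m, d-1) = C(m+d-2, d-1) + C(m+d-3, d-2)`, then `|A(X)| = d`: exactly `d` inner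
products occur between distinct points of `X`. -/
theorem stmt_10 (m d : ℕ) (X : Finset (EuclideanSpace ℝ (Fin m)))
    (hsph : ∀ x ∈ X, ‖x‖ = 1) (hcard : 2 ≤ X.card)
    (hncard : (innerSet m X).ncard ≤ d)
    (hbig : X.card > absBound m (d - 1)) :
    (innerSet m X).ncard = d :=
  stmt_10_general m d X hsph hncard hbig
end
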